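/- arXiv:2605.19965 — 2 statements merged into one kernel-verified Lean document; each statement's English description precedes it below -/
import Mathlib

section
/- Let ε > 0 and let C be an n×n real symmetric positive semidefinite matrix with diagonal part D, off-diagonal part O = C − D, Dᵉ = D + εI, and Bᵉ = (Dᵉ)^{-1/2} O (Dᵉ)^{-1/2}. Then the matrix I + Bᵉ is positive definite; equivalently, every eigenvalue λᵢ of the symmetric matrix Bᵉ satisfies λᵢ > −1. -/
open Matrix

/-- The diagonal matrix formed from the diagonal entries of `C`. -/
noncomputable def diagPart {n : ℕ} (C : Matrix (Fin n) (Fin n) ℝ) :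
    Matrix (Fin n) (Fin n) ℝ :=
  Matrix.diagonal fun i => C i i

/-- `(Dᵉ)⁻¹ᐟ²`, the inverse square root of `Dᵉ = diag(C) + ε I`
(a diagonal matrix with positive entries). -/
noncomputable def invSqrtRegDiag {n : ℕ} (C : Matrix (Fin n) (Fin n) ℝ) (ε : ℝ) :
    Matrix (Fin n) (Fin n) ℝ :=
  Matrix.diagonal fun i => (Real.sqrt (C i i + ε))⁻¹

/-- `Bᵉ = (Dᵉ)⁻¹ᐟ² O (Dᵉ)⁻¹ᐟ²`, the normalized off-diagonal matrix,
where `O = C - diag(C)`. -/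
noncomputable def normOffDiag {n : ℕ} (C : Matrix (Fin n) (Fin n) ℝ) (ε : ℝ) :
    Matrix (Fin n) (Fin n) ℝ :=
  invSqrtRegDiag C ε * (C - diagPart C) * invSqrtRegDiag C ε

/-! Since `(Dᵉ)⁻¹ᐟ² Dᵉ (Dᵉ)⁻¹ᐟ² = I`, the matrix `I + Bᵉ` equals `(Dᵉ)⁻¹ᐟ² (C + εI) (Dᵉ)⁻¹ᐟ²`, a
congruence of the positive definite matrix `C + εI` by an invertible diagonal matrix. Evaluating
the quadratic form of `I + Bᵉ` at a unit eigenvector of `Bᵉ` gives `1 + λᵢ > 0`. -/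

namespace Matrix

lemma PosDef.diagonal_mul_mul_diagonal {ι R : Type*} [Fintype ι] [DecidableEq ι] [CommRing R]
    [PartialOrder R] [StarRing R] [TrivialStar R] {A : Matrix ι ι R} (hA : A.PosDef)
    {d : ι → R} (hd : IsUnit d) : (diagonal d * A * diagonal d).PosDef := by
  simpa [diagonal_conjTranspose] using
    hA.conjTranspose_mul_mul_same (mulVec_injective_of_isUnit (isUnit_diagonal.mpr hd))

open scoped ComplexOrder in
lemma IsHermitian.neg_one_lt_eigenvalues_of_posDef_one_add {ι 𝕜 : Type*} [Fintype ι]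
    [DecidableEq ι] [RCLike 𝕜] {A : Matrix ι ι 𝕜} (hA : A.IsHermitian) (h : (1 + A).PosDef)
    (i : ι) : -1 < hA.eigenvalues i := by
  set v := hA.eigenvectorBasis i
  have hv : (v : ι → 𝕜) ≠ 0 := fun h0 =>
    hA.eigenvectorBasis.orthonormal.ne_zero i (by ext j; exact congrFun h0 j)
  have hvv : RCLike.re (star ⇑v ⬝ᵥ ⇑v) = 1 := by
    rw [dotProduct_comm, ← EuclideanSpace.inner_eq_star_dotProduct, inner_self_eq_norm_sq,
      hA.eigenvectorBasis.orthonormal.1 i, one_pow]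
  have hpos := h.re_dotProduct_pos hv
  rw [add_mulVec, one_mulVec, dotProduct_add, map_add, hvv, ← hA.eigenvalues_eq] at hpos
  linarith

end Matrix

section normOffDiag

variable {n : ℕ} {C : Matrix (Fin n) (Fin n) ℝ} {ε : ℝ}

lemma invSqrtRegDiag_mul_regDiag_mul_invSqrtRegDiag (h : ∀ i, 0 < C i i + ε) :
    invSqrtRegDiag C ε * (diagPart C + ε • 1) * invSqrtRegDiag C ε = 1 := by
  rw [invSqrtRegDiag, diagPart, smul_one_eq_diagonal, diagonal_add, diagonal_mul_diagonal,
    diagonal_mul_diagonal, ← diagonal_one]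
  congr 1
  funext i
  have hs := Real.sqrt_pos.mpr (h i)
  field_simp
  exact (Real.sq_sqrt (h i).le).symm

lemma one_add_normOffDiag_eq (h : ∀ i, 0 < C i i + ε) :
    1 + normOffDiag C ε = invSqrtRegDiag C ε * (C + ε • 1) * invSqrtRegDiag C ε := by
  calc 1 + normOffDiag C ε
      = invSqrtRegDiag C ε * (diagPart C + ε • 1) * invSqrtRegDiag C ε + normOffDiag C ε := by
        rw [invSqrtRegDiag_mul_regDiag_mul_invSqrtRegDiag h]
    _ = invSqrtRegDiag C ε * (C + ε • 1) * invSqrtRegDiag C ε := by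
        rw [normOffDiag, ← add_mul, ← mul_add]
        congr 2
        abel

end normOffDiag

/-- For ε > 0 and C an n×n real symmetric PSD matrix, the
matrix I + Bᵉ is positive definite; equivalently, every eigenvalue of the
symmetric matrix Bᵉ is strictly greater than −1. -/
theorem one_add_normOffDiag_posDef
    {n : ℕ} (ε : ℝ) (hε : 0 < ε)
    (C : Matrix (Fin n) (Fin n) ℝ) (hC : C.PosSemidef)
    (hB : (normOffDiag C ε).IsHermitian) :
    (1 + normOffDiag C ε).PosDef ∧ ∀ i, -1 < hB.eigenvalues i := by
  have hreg : ∀ i, 0 < C i i + ε := fun i => add_pos_of_nonneg_of_pos hC.diag_nonneg hε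
  have hPD : (1 + normOffDiag C ε).PosDef := by
    rw [one_add_normOffDiag_eq hreg]
    exact (PosDef.posSemidef_add hC (PosDef.one.smul hε)).diagonal_mul_mul_diagonal
      (Pi.isUnit_iff.mpr fun i => (inv_pos.mpr (Real.sqrt_pos.mpr (hreg i))).ne'.isUnit)
  exact ⟨hPD, hB.neg_one_lt_eigenvalues_of_posDef_one_add hPD⟩
end

section
/- Let λ₁, …, λₙ be real numbers with λᵢ > −1 for all i, and define R₂ = Σ_{i=1}^n [ log(1 + λᵢ) − λᵢ + (1/2) λᵢ² ]. Then |R₂| ≤ max{ (1/3) Σ_{i : λᵢ ≥ 0} λᵢ³ , (1/3) Σ_{i : λᵢ < 0} |λᵢ|³ / (1 + λᵢ) }. -/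
/-!
Write `r(x) = log(1 + x) - x + x²/2`, so that `r(0) = 0` and `r'(x) = x²/(1 + x)`.
On `x ≥ 0` this derivative lies between `0` and `x²`, giving `0 ≤ r(x) ≤ x³/3`; on `-1 < x ≤ 0`
it lies between `0` and `x²/(1 + x)`, which after comparing derivatives gives
`x³/(3(1 + x)) ≤ r(x) ≤ 0`. Hence `R₂` is a nonnegative part bounded by the first sum plus a
nonpositive part bounded below by minus the second, and such a sum of opposite signs is at most
the larger bound in absolute value.
-/

open Finset Set

theorem abs_add_le_max_of_nonneg_of_nonpos {α : Type*} [AddCommGroup α] [LinearOrder α]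
    [IsOrderedAddMonoid α] {p q a b : α} (hp : 0 ≤ p) (hpa : p ≤ a) (hq : q ≤ 0) (hqb : -b ≤ q) :
    |p + q| ≤ max a b := by
  rw [abs_le]
  constructor
  · calc -max a b ≤ -b := neg_le_neg (le_max_right a b)
      _ ≤ q := hqb
      _ ≤ p + q := le_add_of_nonneg_left hp
  · calc p + q ≤ p := add_le_of_nonpos_right hq
      _ ≤ a := hpa
      _ ≤ max a b := le_max_left a b

theorem monotoneOn_of_hasDerivAt_nonneg {D : Set ℝ} (hD : Convex ℝ D) {g g' : ℝ → ℝ}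
    (hg : ∀ y ∈ D, HasDerivAt g (g' y) y) (hg' : ∀ y ∈ interior D, 0 ≤ g' y) :
    MonotoneOn g D :=
  monotoneOn_of_hasDerivWithinAt_nonneg hD
    (fun y hy ↦ (hg y hy).continuousAt.continuousWithinAt)
    (fun y hy ↦ (hg y (interior_subset hy)).hasDerivWithinAt) hg'

noncomputable def logRemainder (x : ℝ) : ℝ := Real.log (1 + x) - x + 1 / 2 * x ^ 2

theorem logRemainder_zero : logRemainder 0 = 0 := by
  simp [logRemainder]

theorem hasDerivAt_logRemainder {x : ℝ} (hx : -1 < x) :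
    HasDerivAt logRemainder (x ^ 2 / (1 + x)) x := by
  have hx' : 1 + x ≠ 0 := by linarith
  have hlog : HasDerivAt (fun y ↦ Real.log (1 + y)) (1 / (1 + x)) x := by
    simpa using ((hasDerivAt_id x).const_add 1).log hx'
  refine ((hlog.sub (hasDerivAt_id x)).add ((hasDerivAt_pow 2 x).const_mul (1 / 2))).congr_deriv ?_
  field_simp
  ring

theorem logRemainder_nonneg {x : ℝ} (hx : 0 ≤ x) : 0 ≤ logRemainder x := by
  have hmono : MonotoneOn logRemainder (Ici 0) :=
    monotoneOn_of_hasDerivAt_nonneg (convex_Ici 0)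
      (fun y hy ↦ hasDerivAt_logRemainder (by linarith [mem_Ici.1 hy]))
      (fun y hy ↦ by rw [interior_Ici] at hy; have : 0 < y := hy; positivity)
  simpa [logRemainder_zero] using hmono self_mem_Ici hx hx

theorem logRemainder_le_cube_div_three {x : ℝ} (hx : 0 ≤ x) : logRemainder x ≤ x ^ 3 / 3 := by
  have hderiv : ∀ y ∈ Ici (0 : ℝ),
      HasDerivAt (fun y ↦ y ^ 3 / 3 - logRemainder y) (y ^ 3 / (1 + y)) y := by
    intro y hy
    have hy' : 1 + y ≠ 0 := by linarith [mem_Ici.1 hy]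
    refine (((hasDerivAt_pow 3 y).div_const 3).sub
      (hasDerivAt_logRemainder (by linarith [mem_Ici.1 hy]))).congr_deriv ?_
    field_simp
    ring
  have hmono := monotoneOn_of_hasDerivAt_nonneg (convex_Ici 0) hderiv
    (fun y hy ↦ by rw [interior_Ici] at hy; have : 0 < y := hy; positivity)
  simpa [logRemainder_zero] using hmono self_mem_Ici hx hx

theorem logRemainder_nonpos {x : ℝ} (h₁ : -1 < x) (hx : x ≤ 0) : logRemainder x ≤ 0 := by
  have hmono : MonotoneOn logRemainder (Ioc (-1) 0) :=
    monotoneOn_of_hasDerivAt_nonneg (convex_Ioc (-1) 0)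
      (fun y hy ↦ hasDerivAt_logRemainder hy.1)
      (fun y hy ↦ by
        rw [interior_Ioc] at hy
        have : 0 < 1 + y := by linarith [hy.1]
        positivity)
  simpa [logRemainder_zero] using hmono ⟨h₁, hx⟩ ⟨by norm_num, le_rfl⟩ hx

theorem cube_div_le_logRemainder {x : ℝ} (h₁ : -1 < x) (hx : x ≤ 0) :
    x ^ 3 / (3 * (1 + x)) ≤ logRemainder x := by
  have hderiv : ∀ y ∈ Ioc (-1 : ℝ) 0, HasDerivAt (fun y ↦ y ^ 3 / (3 * (1 + y)) - logRemainder y)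
      (-y ^ 3 / (3 * (1 + y) ^ 2)) y := by
    intro y hy
    have hy' : 1 + y ≠ 0 := by linarith [hy.1]
    have hden : HasDerivAt (fun y ↦ 3 * (1 + y)) 3 y := by
      simpa using ((hasDerivAt_id y).const_add 1).const_mul 3
    refine (((hasDerivAt_pow 3 y).div hden (by simpa using hy')).sub
      (hasDerivAt_logRemainder hy.1)).congr_deriv ?_
    field_simp
    ring
  have hmono := monotoneOn_of_hasDerivAt_nonneg (convex_Ioc (-1) 0) hderiv
    (fun y hy ↦ by
      rw [interior_Ioc] at hy
      have : 0 < 1 + y := by linarith [hy.1]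
      have : 0 ≤ -y ^ 3 := by nlinarith [sq_nonneg y, hy.2]
      positivity)
  simpa [logRemainder_zero] using hmono ⟨h₁, hx⟩ ⟨by norm_num, le_rfl⟩ hx

/-- Absolute-value bound on the second-order Taylor
remainder: for real numbers λᵢ > −1 and R₂ = Σᵢ [log(1 + λᵢ) − λᵢ + λᵢ²/2],
|R₂| ≤ max{(1/3) Σ_{λᵢ≥0} λᵢ³, (1/3) Σ_{λᵢ<0} |λᵢ|³/(1 + λᵢ)}. -/
theorem remainder_abs_max_bound
    {n : ℕ} (lam : Fin n → ℝ) (hlam : ∀ i, -1 < lam i) :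
    |∑ i, (Real.log (1 + lam i) - lam i + (1 / 2) * (lam i) ^ 2)|
      ≤ max ((1 / 3) * ∑ i ∈ Finset.univ.filter (fun i => 0 ≤ lam i), (lam i) ^ 3)
            ((1 / 3) * ∑ i ∈ Finset.univ.filter (fun i => lam i < 0),
                |lam i| ^ 3 / (1 + lam i)) := by
  change |∑ i, logRemainder (lam i)| ≤ _
  rw [← sum_filter_add_sum_filter_not univ (fun i => 0 ≤ lam i)]
  simp only [not_le]
  refine abs_add_le_max_of_nonneg_of_nonpos ?_ ?_ ?_ ?_
  · exact sum_nonneg fun i hi ↦ logRemainder_nonneg (mem_filter.1 hi).2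
  · rw [mul_sum]
    refine sum_le_sum fun i hi ↦ ?_
    linarith [logRemainder_le_cube_div_three (mem_filter.1 hi).2]
  · exact sum_nonpos fun i hi ↦ logRemainder_nonpos (hlam i) (mem_filter.1 hi).2.le
  · rw [mul_sum, ← sum_neg_distrib]
    refine sum_le_sum fun i hi ↦ ?_
    have hneg := (mem_filter.1 hi).2
    calc -(1 / 3 * (|lam i| ^ 3 / (1 + lam i))) = lam i ^ 3 / (3 * (1 + lam i)) := by
          rw [abs_of_neg hneg]; field_simp
      _ ≤ logRemainder (lam i) := cube_div_le_logRemainder (hlam i) hneg.le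
end
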